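/- Suppose σ̂_A > σ̂_B and σ̃_A < σ̃_B, and suppose Φ((Δμ − Δβ)/Δσ̂) = Φ(Δμ/Δσ̃) =: α₀. If the budget equals α₀ (i.e., α = α₀ ∈ (0,1)), then x^obl = α and, for every γ ∈ [0,1], x^fair(γ) = α; consequently Q(α) = Q(x^fair(γ)) = Q(x^obl). -/
import Mathlib


noncomputable def gpdf (t : ℝ) : ℝ := Real.exp (-t ^ 2 / 2) / Real.sqrt (2 * Real.pi)

noncomputable def gcdf (x : ℝ) : ℝ := ∫ t in Set.Iic x, gpdf t

noncomputable def gquant : ℝ → ℝ := Function.invFun gcdf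

noncomputable def sHat (η σ : ℝ) : ℝ := Real.sqrt (η ^ 2 + σ ^ 2)

noncomputable def sTil (η σ : ℝ) : ℝ := η ^ 2 / sHat η σ

def Dset (pA α : ℝ) : Set ℝ :=
  {x | x ∈ Set.Ioo (0:ℝ) 1 ∧ (α - pA * x) / (1 - pA) ∈ Set.Ioo (0:ℝ) 1}

noncomputable def Qfun (pA α μA μB sA sB x : ℝ) : ℝ :=
  (1 / α) * (pA * (μA * x + sA * gpdf (gquant (1 - x)))
    + (1 - pA) * (μB * ((α - pA * x) / (1 - pA))
      + sB * gpdf (gquant (1 - (α - pA * x) / (1 - pA)))))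

noncomputable def clampTo (lo hi x : ℝ) : ℝ := min hi (max lo x)


open MeasureTheory Set Real in
lemma gpdf_eq' : gpdf = fun t => Real.exp (-(1/2) * t ^ 2) / Real.sqrt (2 * Real.pi) := by
  funext t; simp only [gpdf]; ring_nf

open MeasureTheory Set Real in
lemma gpdf_pos' (t : ℝ) : 0 < gpdf t := by
  apply div_pos (Real.exp_pos _)
  exact Real.sqrt_pos.2 (by positivity)

open MeasureTheory Set Real in
lemma integrable_gpdf' : Integrable gpdf := by
  rw [gpdf_eq']
  exact (integrable_exp_neg_mul_sq (by norm_num : (0:ℝ) < 1/2)).div_const _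

open MeasureTheory Set Real in
lemma gpdf_total' : ∫ t, gpdf t = 1 := by
  rw [gpdf_eq']
  rw [MeasureTheory.integral_div, integral_gaussian]
  rw [div_eq_one_iff_eq (by positivity)]
  rw [div_div_eq_mul_div, div_one, mul_comm]

open MeasureTheory Set Real in
lemma gcdf_strictMono' : StrictMono gcdf := by
  intro a b hab
  have h1 : (0:ℝ) < ∫ x in a..b, gpdf x := by
    apply intervalIntegral.intervalIntegral_pos_of_pos
    · exact integrable_gpdf'.intervalIntegrable
    · exact gpdf_pos'
    · exact hab
  have h2 := intervalIntegral.integral_Iic_sub_Iic (μ := volume) (f := gpdf) (a := a) (b := b)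
    integrable_gpdf'.integrableOn integrable_gpdf'.integrableOn
  simp only [gcdf]; linarith [h2]

open MeasureTheory Set Real in
lemma gcdf_neg' (x : ℝ) : gcdf (-x) = 1 - gcdf x := by
  have heven : ∀ t : ℝ, gpdf (-t) = gpdf t := by
    intro t; simp [gpdf]
  have h1 : gcdf (-x) = ∫ t in Ioi x, gpdf t := by
    rw [gcdf, ← integral_comp_neg_Ioi]
    simp_rw [heven]
  have h2 : gcdf x + gcdf (-x) = 1 := by
    rw [h1, gcdf, ← gpdf_total']
    exact intervalIntegral.integral_Iic_add_Ioi integrable_gpdf'.integrableOn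
      integrable_gpdf'.integrableOn
  linarith

lemma sHat_pos (η σ : ℝ) (hη : 0 < η) : 0 < sHat η σ :=
  Real.sqrt_pos.2 (by positivity)

/-- if the two cutoff budgets coincide and the budget equals this
common cutoff, then the group-oblivious, `γ`-fair and demographic-parity
selection rates of group `A` all coincide with `α`, hence their utilities are equal. -/
theorem stmt7 (pA α μA μB ηA ηB σA σB βA βB θ xobl : ℝ)
    (hpA : pA ∈ Set.Ioo (0:ℝ) 1) (hα01 : α ∈ Set.Ioo (0:ℝ) 1)
    (hηA : 0 < ηA) (hηB : 0 < ηB) (hσA : 0 < σA) (hσB : 0 < σB)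
    (hshat : sHat ηB σB < sHat ηA σA) (hstil : sTil ηA σA < sTil ηB σB)
    (heq : gcdf (((μA - μB) - (βA - βB)) / (sHat ηA σA - sHat ηB σB))
        = gcdf ((μA - μB) / (sTil ηA σA - sTil ηB σB)))
    (hα0 : α = gcdf (((μA - μB) - (βA - βB)) / (sHat ηA σA - sHat ηB σB)))
    (hθ : pA * (1 - gcdf ((θ - μA + βA) / sHat ηA σA))
        + (1 - pA) * (1 - gcdf ((θ - μB + βB) / sHat ηB σB)) = α)
    (hxobl : xobl = 1 - gcdf ((θ - μA + βA) / sHat ηA σA)) :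
    xobl = α
    ∧ ∀ γ ∈ Set.Icc (0:ℝ) 1,
        clampTo (γ * α / ((1 - pA) + γ * pA)) (α / (pA + γ * (1 - pA))) xobl = α
        ∧ Qfun pA α μA μB (sTil ηA σA) (sTil ηB σB) α
            = Qfun pA α μA μB (sTil ηA σA) (sTil ηB σB)
                (clampTo (γ * α / ((1 - pA) + γ * pA)) (α / (pA + γ * (1 - pA))) xobl)
        ∧ Qfun pA α μA μB (sTil ηA σA) (sTil ηB σB)
                (clampTo (γ * α / ((1 - pA) + γ * pA)) (α / (pA + γ * (1 - pA))) xobl)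
            = Qfun pA α μA μB (sTil ηA σA) (sTil ηB σB) xobl := by
  obtain ⟨hpA0, hpA1⟩ := hpA
  obtain ⟨hα0', hα1'⟩ := hα01
  have hsA : 0 < sHat ηA σA := sHat_pos _ _ hηA
  have hsB : 0 < sHat ηB σB := sHat_pos _ _ hηB
  have hΔ : 0 < sHat ηA σA - sHat ηB σB := by linarith
  obtain ⟨d, hd⟩ : ∃ d : ℝ, d = ((μA - μB) - (βA - βB)) / (sHat ηA σA - sHat ηB σB) := ⟨_, rfl⟩
  rw [← hd] at hα0
  have hdmul : d * (sHat ηA σA - sHat ηB σB) = (μA - μB) - (βA - βB) := by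
    rw [hd]; field_simp
  obtain ⟨θs, hθs⟩ : ∃ t : ℝ, t = μA - βA - d * sHat ηA σA := ⟨_, rfl⟩
  have huA : (θs - μA + βA) / sHat ηA σA = -d := by
    rw [hθs, div_eq_iff hsA.ne']; ring
  have huB : (θs - μB + βB) / sHat ηB σB = -d := by
    rw [hθs, div_eq_iff hsB.ne']; linear_combination -hdmul
  have hFs : pA * (1 - gcdf ((θs - μA + βA) / sHat ηA σA))
      + (1 - pA) * (1 - gcdf ((θs - μB + βB) / sHat ηB σB)) = α := by
    rw [huA, huB, gcdf_neg' d, ← hα0]; ring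
  have hθeq : θ = θs := by
    rcases lt_trichotomy θ θs with h | h | h
    · exfalso
      have h1 : gcdf ((θ - μA + βA) / sHat ηA σA) < gcdf ((θs - μA + βA) / sHat ηA σA) :=
        gcdf_strictMono' ((div_lt_div_iff_of_pos_right hsA).2 (by linarith))
      have h2 : gcdf ((θ - μB + βB) / sHat ηB σB) < gcdf ((θs - μB + βB) / sHat ηB σB) :=
        gcdf_strictMono' ((div_lt_div_iff_of_pos_right hsB).2 (by linarith))
      have m1 := mul_lt_mul_of_pos_left h1 hpA0
      have m2 := mul_lt_mul_of_pos_left h2 (show (0:ℝ) < 1 - pA by linarith)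
      linarith
    · exact h
    · exfalso
      have h1 : gcdf ((θs - μA + βA) / sHat ηA σA) < gcdf ((θ - μA + βA) / sHat ηA σA) :=
        gcdf_strictMono' ((div_lt_div_iff_of_pos_right hsA).2 (by linarith))
      have h2 : gcdf ((θs - μB + βB) / sHat ηB σB) < gcdf ((θ - μB + βB) / sHat ηB σB) :=
        gcdf_strictMono' ((div_lt_div_iff_of_pos_right hsB).2 (by linarith))
      have m1 := mul_lt_mul_of_pos_left h1 hpA0
      have m2 := mul_lt_mul_of_pos_left h2 (show (0:ℝ) < 1 - pA by linarith)
      linarith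
  have hxα : xobl = α := by
    rw [hxobl, hθeq, huA, gcdf_neg' d, ← hα0]; ring
  refine ⟨hxα, fun γ hγ => ?_⟩
  obtain ⟨hγ0, hγ1⟩ := hγ
  have key1 : 0 ≤ γ * pA := by positivity
  have key2 : 0 ≤ γ * (1 - pA) := mul_nonneg hγ0 (by linarith)
  have hden1 : 0 < (1 - pA) + γ * pA := by linarith
  have hden2 : 0 < pA + γ * (1 - pA) := by linarith
  have keyp : 0 ≤ α * ((1 - pA) * (1 - γ)) :=
    mul_nonneg hα0'.le (mul_nonneg (by linarith) (by linarith))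
  have hlo : γ * α / ((1 - pA) + γ * pA) ≤ α := by
    rw [div_le_iff₀ hden1]
    have e1 : α * ((1 - pA) + γ * pA) - γ * α = α * ((1 - pA) * (1 - γ)) := by ring
    linarith
  have hhi : α ≤ α / (pA + γ * (1 - pA)) := by
    rw [le_div_iff₀ hden2]
    have e2 : α - α * (pA + γ * (1 - pA)) = α * ((1 - pA) * (1 - γ)) := by ring
    linarith
  have hclamp : clampTo (γ * α / ((1 - pA) + γ * pA)) (α / (pA + γ * (1 - pA))) xobl = α := by
    rw [hxα, clampTo, max_eq_right hlo, min_eq_right hhi]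
  refine ⟨hclamp, ?_, ?_⟩
  · rw [hclamp]
  · rw [hclamp, hxα]
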